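/- Φ : P* → (ℤ/N)ˣ is a bijection; in particular the set P* has the same cardinality as the unit group (ℤ/N)ˣ, namely |P*| = (p−1)(q−1). -/

import Mathlib

/-! `Φ` is the stereographic projection of the conic `x² − D y² = 1` from the point `(−1, 0)`:
the line through `(−1, 0)` and `(x, y)` is `m y = 1 + x` with `m = Φ(x, y)`. Substituting into the
conic gives `y ((m² − D) y − 2m) = 0`, so for a unit `y` the point is recovered from `m` as soon as
`m² − D` is invertible, which holds for every `m` because `D` is a non-square modulo `p` and `q`.
Conversely `Φ⁻¹(m)` lies on the conic over `m`, with `y = 2m/(m² − D)` a unit since `N` is odd.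
Hence `|P*| = |(ℤ/N)ˣ| = φ(pq)`. -/

section Stereographic

open scoped Ring

variable {R : Type*} [CommRing R] {D x y m : R}

theorem isUnit_one_add_of_sq_sub_mul_sq_eq_one (hD : IsUnit D) (hy : IsUnit y)
    (h : x ^ 2 - D * y ^ 2 = 1) : IsUnit (1 + x) := by
  have hfactor : (1 + x) * (x - 1) = D * y ^ 2 := by linear_combination h
  exact isUnit_of_mul_isUnit_left (hfactor ▸ hD.mul (hy.pow 2))

theorem sq_sub_mul_eq_two_mul_of_mul_eq_one_add (hy : IsUnit y)
    (h : x ^ 2 - D * y ^ 2 = 1) (hm : m * y = 1 + x) : (m ^ 2 - D) * y = 2 * m := by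
  have hzero : y * ((m ^ 2 - D) * y - 2 * m) = y * 0 := by
    linear_combination (m * y + x - 1) * hm + h
  exact sub_eq_zero.mp (hy.mul_left_cancel hzero)

/-- `Φ⁻¹(m)`: the second intersection point of the line `m y = 1 + x` with the conic
`x² − D y² = 1`. -/
noncomputable def conicParam (D m : R) : R × R :=
  ((m ^ 2 + D) * (m ^ 2 - D)⁻¹ʳ, 2 * m * (m ^ 2 - D)⁻¹ʳ)

theorem conicParam_sq_sub_mul_sq (hm : IsUnit (m ^ 2 - D)) :
    (conicParam D m).1 ^ 2 - D * (conicParam D m).2 ^ 2 = 1 := by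
  simp only [conicParam]
  linear_combination
    ((m ^ 2 - D) * (m ^ 2 - D)⁻¹ʳ + 1) * Ring.mul_inverse_cancel _ hm

theorem mul_conicParam_snd (hm : IsUnit (m ^ 2 - D)) :
    m * (conicParam D m).2 = 1 + (conicParam D m).1 := by
  simp only [conicParam]
  linear_combination Ring.mul_inverse_cancel _ hm

theorem bijOn_stereographic (h2 : IsUnit (2 : R)) (hD : ∀ m : R, IsUnit (m ^ 2 - D)) :
    Set.BijOn (fun P : R × R => (1 + P.1) * P.2⁻¹ʳ)
      {P : R × R | IsUnit P.2 ∧ P.1 ^ 2 - D * P.2 ^ 2 = 1} {u : R | IsUnit u} := by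
  refine ⟨?_, ?_, ?_⟩
  · rintro P ⟨hy, h⟩
    have hD' : IsUnit D := by simpa using (hD 0).neg
    exact (isUnit_one_add_of_sq_sub_mul_sq_eq_one hD' hy h).mul hy.ringInverse
  · rintro ⟨x, y⟩ ⟨hy, h⟩ ⟨x', y'⟩ ⟨hy', h'⟩ (hxy : (1 + x) * y⁻¹ʳ = (1 + x') * y'⁻¹ʳ)
    set m := (1 + x) * y⁻¹ʳ
    have hmy : m * y = 1 + x := Ring.inverse_mul_cancel_right _ _ hy
    have hmy' : m * y' = 1 + x' := hxy ▸ Ring.inverse_mul_cancel_right _ _ hy'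
    obtain rfl : y = y' := (hD m).mul_left_cancel <| by
      rw [sq_sub_mul_eq_two_mul_of_mul_eq_one_add hy h hmy,
        sq_sub_mul_eq_two_mul_of_mul_eq_one_add hy' h' hmy']
    exact Prod.ext (by linear_combination hmy' - hmy) rfl
  · intro m (hm : IsUnit m)
    have hy : IsUnit (conicParam D m).2 := (h2.mul hm).mul (hD m).ringInverse
    refine ⟨conicParam D m, ⟨hy, conicParam_sq_sub_mul_sq (hD m)⟩, ?_⟩
    change (1 + (conicParam D m).1) * (conicParam D m).2⁻¹ʳ = m
    rw [← mul_conicParam_snd (hD m), Ring.mul_inverse_cancel_right _ _ hy]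

end Stereographic

theorem Set.ncard_setOf_isUnit (M : Type*) [Monoid M] :
    {u : M | IsUnit u}.ncard = Nat.card Mˣ :=
  Set.ncard_range_of_injective Units.val_injective

namespace ZMod

theorem inv_eq_ringInverse {n : ℕ} {a : ZMod n} (ha : IsUnit a) : a⁻¹ = Ring.inverse a := by
  obtain ⟨u, rfl⟩ := ha
  rw [inv_coe_unit, Ring.inverse_unit]

theorem isUnit_iff_isUnit_castHom {p q : ℕ} (hpq : p.Coprime q) (a : ZMod (p * q)) :
    IsUnit a ↔ IsUnit (castHom (dvd_mul_right p q) (ZMod p) a) ∧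
      IsUnit (castHom (dvd_mul_left q p) (ZMod q) a) := by
  have hcrt : (chineseRemainder hpq : ZMod (p * q) →+* ZMod p × ZMod q) =
      (castHom (dvd_mul_right p q) (ZMod p)).prod (castHom (dvd_mul_left q p) (ZMod q)) :=
    RingHom.ext_zmod _ _
  rw [← MulEquiv.isUnit_map (chineseRemainder hpq), ← RingEquiv.coe_toRingHom, hcrt]
  exact Prod.isUnit_iff

theorem isUnit_sq_sub_of_not_isSquare {p q : ℕ} [Fact p.Prime] [Fact q.Prime]
    (hpq : p.Coprime q) {D : ZMod (p * q)}
    (hDp : ¬ ∃ t : ZMod p, t ^ 2 = castHom (dvd_mul_right p q) (ZMod p) D)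
    (hDq : ¬ ∃ t : ZMod q, t ^ 2 = castHom (dvd_mul_left q p) (ZMod q) D) (m : ZMod (p * q)) :
    IsUnit (m ^ 2 - D) := by
  rw [isUnit_iff_isUnit_castHom hpq, map_sub, map_pow, map_sub, map_pow]
  exact ⟨(sub_ne_zero.mpr fun h => hDp ⟨_, h⟩).isUnit,
    (sub_ne_zero.mpr fun h => hDq ⟨_, h⟩).isUnit⟩

end ZMod

theorem phi_bijective_general (p q : ℕ) (hp : p.Prime) (hq : q.Prime)
    (hpodd : Odd p) (hqodd : Odd q) (hpq : p ≠ q)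
    (D : ZMod (p * q))
    (hDp : ¬ ∃ t : ZMod p, t ^ 2 = ZMod.castHom (dvd_mul_right p q) (ZMod p) D)
    (hDq : ¬ ∃ t : ZMod q, t ^ 2 = ZMod.castHom (dvd_mul_left q p) (ZMod q) D) :
    Set.BijOn (fun P : ZMod (p * q) × ZMod (p * q) => (1 + P.1) * P.2⁻¹)
      {P : ZMod (p * q) × ZMod (p * q) | IsUnit P.2 ∧ P.1 ^ 2 - D * P.2 ^ 2 = 1}
      {u : ZMod (p * q) | IsUnit u} ∧
    Set.ncard
      {P : ZMod (p * q) × ZMod (p * q) | IsUnit P.2 ∧ P.1 ^ 2 - D * P.2 ^ 2 = 1}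
      = (p - 1) * (q - 1) := by
  have : Fact p.Prime := ⟨hp⟩
  have : Fact q.Prime := ⟨hq⟩
  have : NeZero (p * q) := ⟨mul_ne_zero hp.ne_zero hq.ne_zero⟩
  have hcop : p.Coprime q := (Nat.coprime_primes hp hq).mpr hpq
  have h2 : IsUnit (2 : ZMod (p * q)) := by
    simpa using (ZMod.isUnit_iff_coprime 2 (p * q)).mpr
      (Nat.coprime_two_left.mpr (hpodd.mul hqodd))
  have hbij : Set.BijOn (fun P : ZMod (p * q) × ZMod (p * q) => (1 + P.1) * P.2⁻¹)
      {P | IsUnit P.2 ∧ P.1 ^ 2 - D * P.2 ^ 2 = 1} {u | IsUnit u} :=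
    (bijOn_stereographic h2 (ZMod.isUnit_sq_sub_of_not_isSquare hcop hDp hDq)).congr
      fun P hP => by rw [ZMod.inv_eq_ringInverse hP.1]
  refine ⟨hbij, ?_⟩
  rw [← hbij.injOn.ncard_image, hbij.image_eq, Set.ncard_setOf_isUnit,
    Nat.card_eq_fintype_card, ZMod.card_units_eq_totient, Nat.totient_mul hcop,
    Nat.totient_prime hp, Nat.totient_prime hq]

/-- `Φ : P* → (ℤ/N)ˣ`, `Φ(x,y) = (1+x)·y⁻¹`, is a bijection from
`P* = {(x,y) ∈ ℤ/N × (ℤ/N)ˣ : x² − Dy² = 1}` onto the units of `ℤ/N`; in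
particular `|P*| = (p−1)(q−1)`. -/
theorem phi_bijective (p q : ℕ) (hp : p.Prime) (hq : q.Prime)
    (hpodd : Odd p) (hqodd : Odd q) (hpq : p ≠ q)
    (D : ZMod (p * q))
    (hDp : ¬ ∃ t : ZMod p, t ^ 2 = ZMod.castHom (dvd_mul_right p q) (ZMod p) D)
    (hDq : ¬ ∃ t : ZMod q, t ^ 2 = ZMod.castHom (dvd_mul_left q p) (ZMod q) D)
    (hDp' : ¬ ∃ t : ZMod p, t ^ 2 = ZMod.castHom (dvd_mul_right p q) (ZMod p) (-D))
    (hDq' : ¬ ∃ t : ZMod q, t ^ 2 = ZMod.castHom (dvd_mul_left q p) (ZMod q) (-D)) :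
    Set.BijOn (fun P : ZMod (p * q) × ZMod (p * q) => (1 + P.1) * P.2⁻¹)
      {P : ZMod (p * q) × ZMod (p * q) | IsUnit P.2 ∧ P.1 ^ 2 - D * P.2 ^ 2 = 1}
      {u : ZMod (p * q) | IsUnit u} ∧
    Set.ncard
      {P : ZMod (p * q) × ZMod (p * q) | IsUnit P.2 ∧ P.1 ^ 2 - D * P.2 ^ 2 = 1}
      = (p - 1) * (q - 1) :=
  phi_bijective_general p q hp hq hpodd hqodd hpq D hDp hDq
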